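/- For any m×n matrix A over F_2, the Warning Propagation slush of the transposed matrix is the slush of A with the roles of variables and checks exchanged: V_s(A^⊤) = C_s(A) and C_s(A^⊤) = V_s(A), under the canonical identification of the variable nodes of A^⊤ (columns of A^⊤, i.e. rows of A) with the check nodes of A and of the check nodes of A^⊤ with the variable nodes of A. -/
import Mathlib


open Filter Topology MeasureTheory ProbabilityTheory

noncomputable section

/-- `φ_d(α) = 1 − exp(−d·exp(−d(1−α)))`. -/
def phiFn (d α : ℝ) : ℝ := 1 - Real.exp (-d * Real.exp (-d * (1 - α)))

/-- `Φ_d(α) = exp(−d·exp(−d(1−α))) + (1 + d(1−α))·exp(−d(1−α)) − 1`. -/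
def PhiFn (d α : ℝ) : ℝ :=
  Real.exp (-d * Real.exp (-d * (1 - α))) + (1 + d * (1 - α)) * Real.exp (-d * (1 - α)) - 1

/-- `α_*(d)`: the smallest fixed point of `φ_d` in `[0,1]`. -/
def alphaMin (d : ℝ) : ℝ := sInf {α : ℝ | α ∈ Set.Icc (0:ℝ) 1 ∧ phiFn d α = α}

/-- `α^*(d)`: the largest fixed point of `φ_d` in `[0,1]`. -/
def alphaMax (d : ℝ) : ℝ := sSup {α : ℝ | α ∈ Set.Icc (0:ℝ) 1 ∧ phiFn d α = α}

/-- `α_0(d)`: for `d ≤ e` equal to `α_*(d)`; for `d > e` the unique fixed point of `φ_d`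
in the open interval `(α_*(d), α^*(d))`. -/
def alphaMid (d : ℝ) : ℝ :=
  if d ≤ Real.exp 1 then alphaMin d
  else sInf {α : ℝ | α ∈ Set.Ioo (alphaMin d) (alphaMax d) ∧ phiFn d α = α}

/-- An `m × n` matrix over `F_2`. -/
abbrev Mat (m n : ℕ) := Fin m → Fin n → ZMod 2

/-- Matrix-vector multiplication over `F_2`. -/
def matMulVec {m n : ℕ} (A : Mat m n) (x : Fin n → ZMod 2) : Fin m → ZMod 2 :=
  fun i => ∑ j, A i j * x j

/-- Coordinate `i` is frozen in `A`: every kernel vector vanishes there. -/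
def frozen {m n : ℕ} (A : Mat m n) (i : Fin n) : Prop :=
  ∀ x : Fin n → ZMod 2, matMulVec A x = 0 → x i = 0

/-- `f(A) = |F(A)|/n`, the fraction of frozen coordinates. -/
def frozenFrac {m n : ℕ} (A : Mat m n) : ℝ :=
  (({i : Fin n | frozen A i}).ncard : ℝ) / (n : ℝ)

/-- Bernoulli(p) law on `F_2`, giving mass `p` to `1` and `1−p` to `0`. -/
def bern (p : ℝ) : Measure (ZMod 2) :=
  ENNReal.ofReal p • Measure.dirac 1 + ENNReal.ofReal (1 - p) • Measure.dirac 0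

/-- The law of the random matrix `A(n,d)`: entries i.i.d. Bernoulli with `p = min(d/n, 1)`. -/
def matrixLaw (n : ℕ) (d : ℝ) : Measure (Mat n n) :=
  Measure.pi fun _ : Fin n => Measure.pi fun _ : Fin n => bern (min (d / (n : ℝ)) 1)

/-- Warning Propagation message values: frozen, slush, unfrozen. -/
inductive Msg
  | f | s | u
deriving DecidableEq

/-- One round of check-to-variable updates, from the variable-to-check messages `wvc`. -/
def stepCV {m n : ℕ} (A : Mat m n) (wvc : Fin n → Fin m → Msg) (a : Fin m) (v : Fin n) : Msg :=
  if ∀ y : Fin n, y ≠ v → A a y = 1 → wvc y a = Msg.f then Msg.f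
  else if ∃ y : Fin n, y ≠ v ∧ A a y = 1 ∧ wvc y a = Msg.u then Msg.u
  else Msg.s

/-- One round of variable-to-check updates, from the (current) check-to-variable
messages `wcv`. -/
def stepVC {m n : ℕ} (A : Mat m n) (wcv : Fin m → Fin n → Msg) (v : Fin n) (a : Fin m) : Msg :=
  if ∀ b : Fin m, b ≠ a → A b v = 1 → wcv b v = Msg.u then Msg.u
  else if ∃ b : Fin m, b ≠ a ∧ A b v = 1 ∧ wcv b v = Msg.f then Msg.f
  else Msg.s

/-- Warning Propagation messages at time `t`: first component is `w_{a→v}(A,t)`,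
second is `w_{v→a}(A,t)`; all messages are `s` at time `0`. -/
def wp {m n : ℕ} (A : Mat m n) : ℕ → (Fin m → Fin n → Msg) × (Fin n → Fin m → Msg)
  | 0 => (fun _ _ => Msg.s, fun _ _ => Msg.s)
  | t + 1 => (stepCV A (wp A t).2, stepVC A (stepCV A (wp A t).2))

open Classical in
/-- The limiting check-to-variable message `w_{a→v}(A)`. -/
def wCVlim {m n : ℕ} (A : Mat m n) (a : Fin m) (v : Fin n) : Msg :=
  if h : ∃ x : Msg, ∀ᶠ t in Filter.atTop, (wp A t).1 a v = x then h.choose else Msg.s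

open Classical in
/-- The limiting variable-to-check message `w_{v→a}(A)`. -/
def wVClim {m n : ℕ} (A : Mat m n) (v : Fin n) (a : Fin m) : Msg :=
  if h : ∃ x : Msg, ∀ᶠ t in Filter.atTop, (wp A t).2 v a = x then h.choose else Msg.s

/-- `V_f(A)`: variables receiving some limiting `f`-message. -/
def Vf {m n : ℕ} (A : Mat m n) : Set (Fin n) :=
  {v | ∃ a : Fin m, A a v = 1 ∧ wCVlim A a v = Msg.f}

/-- `V_u(A)`: variables all of whose incoming limiting messages are `u`. -/
def Vu {m n : ℕ} (A : Mat m n) : Set (Fin n) :=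
  {v | ∀ a : Fin m, A a v = 1 → wCVlim A a v = Msg.u}

/-- `V_s(A)`: the slush variables. -/
def Vslush {m n : ℕ} (A : Mat m n) : Set (Fin n) :=
  {v | (∀ a : Fin m, A a v = 1 → wCVlim A a v ≠ Msg.f) ∧
       2 ≤ ({a : Fin m | A a v = 1 ∧ wCVlim A a v = Msg.s}).ncard}

/-- `C_s(A)`: the slush checks. -/
def Cslush {m n : ℕ} (A : Mat m n) : Set (Fin m) :=
  {a | (∀ v : Fin n, A a v = 1 → wVClim A v a ≠ Msg.u) ∧
       2 ≤ ({v : Fin n | A a v = 1 ∧ wVClim A v a = Msg.s}).ncard}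

namespace Statement18Aux

/-- The involution on messages swapping `f` and `u`. -/
def msig : Msg → Msg
  | Msg.f => Msg.u
  | Msg.u => Msg.f
  | Msg.s => Msg.s

@[simp] lemma msig_eq_u {x : Msg} : msig x = Msg.u ↔ x = Msg.f := by cases x <;> simp [msig]
@[simp] lemma msig_eq_f {x : Msg} : msig x = Msg.f ↔ x = Msg.u := by cases x <;> simp [msig]
@[simp] lemma msig_eq_s {x : Msg} : msig x = Msg.s ↔ x = Msg.s := by cases x <;> simp [msig]
@[simp] lemma msig_msig (x : Msg) : msig (msig x) = x := by cases x <;> rfl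

/-- The flat partial order on messages: `s` below everything. -/
def mle (x y : Msg) : Prop := x = Msg.s ∨ x = y

lemma mle_refl (x : Msg) : mle x x := Or.inr rfl
lemma mle_s (x : Msg) : mle Msg.s x := Or.inl rfl
lemma mle_antisymm {x y : Msg} (h : mle x y) (h' : mle y x) : x = y := by
  rcases h with h | h
  · rcases h' with h' | h'
    · exact h.trans h'.symm
    · exact h'.symm
  · exact h

lemma mle_f {x y : Msg} (h : mle x y) (hx : x = Msg.f) : y = Msg.f := by
  rcases h with h | h
  · rw [hx] at h; cases h
  · rw [← h, hx]

lemma mle_u {x y : Msg} (h : mle x y) (hx : x = Msg.u) : y = Msg.u := by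
  rcases h with h | h
  · rw [hx] at h; cases h
  · rw [← h, hx]

/-- Pointwise flat order on message matrices. -/
def wle {α β : Type} (w w' : α → β → Msg) : Prop := ∀ i j, mle (w i j) (w' i j)

lemma wle_s {m n : ℕ} (w : Fin m → Fin n → Msg) :
    wle (fun (_ : Fin m) (_ : Fin n) => Msg.s) w := fun _ _ => mle_s _

lemma stepCV_mono {m n : ℕ} (A : Mat m n) {w w' : Fin n → Fin m → Msg} (h : wle w w') :
    wle (stepCV A w) (stepCV A w') := by
  intro a v
  unfold stepCV
  by_cases h1 : ∀ y, y ≠ v → A a y = 1 → w y a = Msg.f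
  · have h1' : ∀ y, y ≠ v → A a y = 1 → w' y a = Msg.f :=
      fun y hy he => mle_f (h y a) (h1 y hy he)
    rw [if_pos h1, if_pos h1']
    exact mle_refl _
  · rw [if_neg h1]
    by_cases h2 : ∃ y, y ≠ v ∧ A a y = 1 ∧ w y a = Msg.u
    · obtain ⟨y, hy, he, hu⟩ := h2
      have hu' : w' y a = Msg.u := mle_u (h y a) hu
      have h1' : ¬ ∀ y, y ≠ v → A a y = 1 → w' y a = Msg.f := by
        intro hc
        rw [hc y hy he] at hu'
        cases hu'
      rw [if_pos ⟨y, hy, he, hu⟩, if_neg h1', if_pos ⟨y, hy, he, hu'⟩]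
      exact mle_refl _
    · rw [if_neg h2]
      exact mle_s _

lemma stepVC_mono {m n : ℕ} (A : Mat m n) {w w' : Fin m → Fin n → Msg} (h : wle w w') :
    wle (stepVC A w) (stepVC A w') := by
  intro v a
  unfold stepVC
  by_cases h1 : ∀ b, b ≠ a → A b v = 1 → w b v = Msg.u
  · have h1' : ∀ b, b ≠ a → A b v = 1 → w' b v = Msg.u :=
      fun b hb he => mle_u (h b v) (h1 b hb he)
    rw [if_pos h1, if_pos h1']
    exact mle_refl _
  · rw [if_neg h1]
    by_cases h2 : ∃ b, b ≠ a ∧ A b v = 1 ∧ w b v = Msg.f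
    · obtain ⟨b, hb, he, hf⟩ := h2
      have hf' : w' b v = Msg.f := mle_f (h b v) hf
      have h1' : ¬ ∀ b, b ≠ a → A b v = 1 → w' b v = Msg.u := by
        intro hc
        rw [hc b hb he] at hf'
        cases hf'
      rw [if_pos ⟨b, hb, he, hf⟩, if_neg h1', if_pos ⟨b, hb, he, hf'⟩]
      exact mle_refl _
    · rw [if_neg h2]
      exact mle_s _

lemma wp_mono {m n : ℕ} (A : Mat m n) :
    ∀ t, wle (wp A t).1 (wp A (t + 1)).1 ∧ wle (wp A t).2 (wp A (t + 1)).2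
  | 0 => ⟨fun _ _ => mle_s _, fun _ _ => mle_s _⟩
  | t + 1 =>
    ⟨stepCV_mono A (wp_mono A t).2,
     stepVC_mono A (stepCV_mono A (wp_mono A t).2)⟩

open Finset in
/-- Number of non-`s` messages in a message state. -/
def cnt {m n : ℕ} (p : (Fin m → Fin n → Msg) × (Fin n → Fin m → Msg)) : ℕ :=
  (univ.filter (fun q : Fin m × Fin n => p.1 q.1 q.2 ≠ Msg.s)).card +
  (univ.filter (fun q : Fin n × Fin m => p.2 q.1 q.2 ≠ Msg.s)).card

open Finset in
lemma filter_subset_of_wle {α β : Type} [Fintype α] [Fintype β] [DecidableEq α] [DecidableEq β]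
    {w w' : α → β → Msg} (h : wle w w') :
    (univ.filter (fun q : α × β => w q.1 q.2 ≠ Msg.s)) ⊆
      (univ.filter (fun q : α × β => w' q.1 q.2 ≠ Msg.s)) := by
  intro q hq
  simp only [mem_filter, mem_univ, true_and] at hq ⊢
  rcases h q.1 q.2 with hs | he
  · exact absurd hs hq
  · rw [← he]; exact hq

open Finset in
lemma eq_of_wle_of_filter_eq {α β : Type} [Fintype α] [Fintype β] [DecidableEq α] [DecidableEq β]
    {w w' : α → β → Msg} (h : wle w w')
    (he : (univ.filter (fun q : α × β => w q.1 q.2 ≠ Msg.s)) =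
      (univ.filter (fun q : α × β => w' q.1 q.2 ≠ Msg.s))) : w = w' := by
  funext i j
  rcases h i j with hs | heq
  · by_cases hs' : w' i j = Msg.s
    · rw [hs, hs']
    · have : (i, j) ∈ (univ.filter (fun q : α × β => w' q.1 q.2 ≠ Msg.s)) := by
        simp only [mem_filter, mem_univ, true_and]; exact hs'
      rw [← he] at this
      simp only [mem_filter, mem_univ, true_and] at this
      exact absurd hs this
  · exact heq

open Finset in
lemma wp_eventually_constant {m n : ℕ} (A : Mat m n) :
    ∃ T, ∀ t, T ≤ t → wp A t = wp A T := by
  -- first find a step where nothing changes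
  have key : ∃ T, wp A T = wp A (T + 1) := by
    by_contra hc
    push_neg at hc
    have hlt : ∀ t, cnt (wp A t) < cnt (wp A (t + 1)) := by
      intro t
      obtain ⟨h1, h2⟩ := wp_mono A t
      have hs1 := filter_subset_of_wle h1
      have hs2 := filter_subset_of_wle h2
      have hc1 := Finset.card_le_card hs1
      have hc2 := Finset.card_le_card hs2
      rcases lt_or_eq_of_le hc1 with h | h
      · unfold cnt; omega
      rcases lt_or_eq_of_le hc2 with h' | h'
      · unfold cnt; omega
      · exfalso
        apply hc t
        have e1 := eq_of_wle_of_filter_eq h1 (Finset.eq_of_subset_of_card_le hs1 h.ge)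
        have e2 := eq_of_wle_of_filter_eq h2 (Finset.eq_of_subset_of_card_le hs2 h'.ge)
        exact Prod.ext e1 e2
    have hsm : StrictMono (fun t => cnt (wp A t)) := strictMono_nat_of_lt_succ hlt
    have hb : ∀ t, cnt (wp A t) ≤ m * n + n * m := by
      intro t
      unfold cnt
      have b1 := Finset.card_le_card (Finset.filter_subset
        (fun q : Fin m × Fin n => (wp A t).1 q.1 q.2 ≠ Msg.s) univ)
      have b2 := Finset.card_le_card (Finset.filter_subset
        (fun q : Fin n × Fin m => (wp A t).2 q.1 q.2 ≠ Msg.s) univ)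
      simp only [Finset.card_univ, Fintype.card_prod, Fintype.card_fin] at b1 b2
      omega
    have h1 := hsm.le_apply (x := m * n + n * m + 1)
    have h2 := hb (m * n + n * m + 1)
    omega
  obtain ⟨T, hT⟩ := key
  refine ⟨T, fun t ht => ?_⟩
  obtain ⟨k, rfl⟩ := Nat.exists_eq_add_of_le ht
  clear ht
  induction k with
  | zero => rfl
  | succ k ih =>
    have : wp A (T + (k + 1)) = wp A ((T + k) + 1) := by ring_nf
    rw [this]
    show (stepCV A (wp A (T + k)).2, stepVC A (stepCV A (wp A (T + k)).2)) = wp A T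
    rw [ih]
    exact hT.symm

lemma wCVlim_eq {m n : ℕ} (A : Mat m n) {T : ℕ} (hT : ∀ t, T ≤ t → wp A t = wp A T)
    (a : Fin m) (v : Fin n) : wCVlim A a v = (wp A T).1 a v := by
  have hev : ∀ᶠ t in Filter.atTop, (wp A t).1 a v = (wp A T).1 a v :=
    Filter.eventually_atTop.2 ⟨T, fun t ht => by rw [hT t ht]⟩
  have hex : ∃ x : Msg, ∀ᶠ t in Filter.atTop, (wp A t).1 a v = x := ⟨_, hev⟩
  rw [wCVlim, dif_pos hex]
  obtain ⟨t, h1, h2⟩ := (hex.choose_spec.and hev).exists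
  exact h1.symm.trans h2

lemma wVClim_eq {m n : ℕ} (A : Mat m n) {T : ℕ} (hT : ∀ t, T ≤ t → wp A t = wp A T)
    (v : Fin n) (a : Fin m) : wVClim A v a = (wp A T).2 v a := by
  have hev : ∀ᶠ t in Filter.atTop, (wp A t).2 v a = (wp A T).2 v a :=
    Filter.eventually_atTop.2 ⟨T, fun t ht => by rw [hT t ht]⟩
  have hex : ∃ x : Msg, ∀ᶠ t in Filter.atTop, (wp A t).2 v a = x := ⟨_, hev⟩
  rw [wVClim, dif_pos hex]
  obtain ⟨t, h1, h2⟩ := (hex.choose_spec.and hev).exists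
  exact h1.symm.trans h2

/-- The CV step of the transpose is the σ-conjugate of the VC step. -/
lemma stepCV_transpose {m n : ℕ} (A : Mat m n) (w : Fin m → Fin n → Msg)
    (a : Fin n) (v : Fin m) :
    stepCV (fun v a => A a v) w a v
      = msig (stepVC A (fun i j => msig (w i j)) a v) := by
  unfold stepCV stepVC
  simp only [msig_eq_u, msig_eq_f]
  split_ifs <;> rfl

/-- The VC step of the transpose is the σ-conjugate of the CV step. -/
lemma stepVC_transpose {m n : ℕ} (A : Mat m n) (w : Fin n → Fin m → Msg)
    (v : Fin m) (a : Fin n) :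
    stepVC (fun v a => A a v) w v a
      = msig (stepCV A (fun i j => msig (w i j)) v a) := by
  unfold stepCV stepVC
  simp only [msig_eq_u, msig_eq_f]
  split_ifs <;> rfl

/-- `σ`-conjugated VC-messages of the transpose. -/
def avc {m n : ℕ} (A : Mat m n) (t : ℕ) : Fin n → Fin m → Msg :=
  fun i j => msig ((wp (fun v a => A a v) t).1 i j)

/-- `σ`-conjugated CV-messages of the transpose. -/
def bcv {m n : ℕ} (A : Mat m n) (t : ℕ) : Fin m → Fin n → Msg :=
  fun i j => msig ((wp (fun v a => A a v) t).2 i j)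

lemma avc_succ {m n : ℕ} (A : Mat m n) (t : ℕ) :
    avc A (t + 1) = stepVC A (bcv A t) := by
  funext i j
  show msig (stepCV (fun v a => A a v) (wp (fun v a => A a v) t).2 i j) = _
  rw [stepCV_transpose]
  rw [msig_msig]
  rfl

lemma bcv_succ {m n : ℕ} (A : Mat m n) (t : ℕ) :
    bcv A (t + 1) = stepCV A (avc A (t + 1)) := by
  funext i j
  show msig (stepVC (fun v a => A a v)
      (stepCV (fun v a => A a v) (wp (fun v a => A a v) t).2) i j) = _
  rw [stepVC_transpose]
  rw [msig_msig]
  rfl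

lemma interleave {m n : ℕ} (A : Mat m n) :
    ∀ t, wle (wp A t).2 (avc A (t + 1)) ∧ wle (avc A (t + 1)) (wp A (t + 1)).2 ∧
      wle (wp A (t + 1)).1 (bcv A (t + 1)) ∧ wle (bcv A (t + 1)) (wp A (t + 2)).1 := by
  intro t
  induction t with
  | zero =>
    have hb0 : bcv A 0 = fun (_ : Fin m) (_ : Fin n) => Msg.s := rfl
    have i1 : wle (wp A 0).2 (avc A 1) := fun _ _ => mle_s _
    have i2 : wle (avc A 1) (wp A 1).2 := by
      rw [avc_succ, hb0]
      exact stepVC_mono A (wle_s _)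
    have i3 : wle (wp A 1).1 (bcv A 1) := by
      rw [bcv_succ]
      exact stepCV_mono A i1
    have i4 : wle (bcv A 1) (wp A 2).1 := by
      rw [bcv_succ]
      exact stepCV_mono A i2
    exact ⟨i1, i2, i3, i4⟩
  | succ t ih =>
    obtain ⟨_, _, i3, i4⟩ := ih
    have j1 : wle (wp A (t + 1)).2 (avc A (t + 2)) := by
      rw [avc_succ]
      exact stepVC_mono A i3
    have j2 : wle (avc A (t + 2)) (wp A (t + 2)).2 := by
      rw [avc_succ]
      exact stepVC_mono A i4
    have j3 : wle (wp A (t + 2)).1 (bcv A (t + 2)) := by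
      rw [bcv_succ]
      exact stepCV_mono A j1
    have j4 : wle (bcv A (t + 2)) (wp A (t + 3)).1 := by
      rw [bcv_succ]
      exact stepCV_mono A j2
    exact ⟨j1, j2, j3, j4⟩

lemma lim_transpose {m n : ℕ} (A : Mat m n) :
    (∀ (a : Fin n) (v : Fin m),
      wCVlim (fun v a => A a v) a v = msig (wVClim A a v)) ∧
    (∀ (v : Fin m) (a : Fin n),
      wVClim (fun v a => A a v) v a = msig (wCVlim A v a)) := by
  obtain ⟨TA, hTA⟩ := wp_eventually_constant A
  obtain ⟨TB, hTB⟩ := wp_eventually_constant (fun v a => A a v)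
  set T := max TA TB with hT
  have hTA' : ∀ t, T ≤ t → wp A t = wp A T := by
    intro t ht
    rw [hTA t (le_trans (le_max_left _ _) ht), hTA T (le_max_left _ _)]
  have hTB' : ∀ t, T ≤ t → wp (fun v a => A a v) t = wp (fun v a => A a v) T := by
    intro t ht
    rw [hTB t (le_trans (le_max_right _ _) ht), hTB T (le_max_right _ _)]
  obtain ⟨i1, i2, i3, i4⟩ := interleave A (t := T)
  -- avc A (T+1) = (wp A T).2
  have hwp1 : wp A (T + 1) = wp A T := hTA' _ (Nat.le_succ T)
  have hwp2 : wp A (T + 2) = wp A T := hTA' _ (by omega)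
  have ha : avc A (T + 1) = (wp A T).2 := by
    funext i j
    refine mle_antisymm ?_ ?_
    · have := i2 i j; rwa [hwp1] at this
    · exact i1 i j
  have hb : bcv A (T + 1) = (wp A T).1 := by
    funext i j
    refine mle_antisymm ?_ ?_
    · have := i4 i j; rwa [hwp2] at this
    · have := i3 i j; rwa [hwp1] at this
  have hwpB : wp (fun v a => A a v) (T + 1) = wp (fun v a => A a v) T :=
    hTB' _ (Nat.le_succ T)
  constructor
  · intro a v
    rw [wCVlim_eq (fun v a => A a v) hTB' a v, wVClim_eq A hTA' a v]
    have : msig ((wp (fun v a => A a v) T).1 a v) = (wp A T).2 a v := by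
      have := congrFun (congrFun ha a) v
      rw [avc] at this
      rw [← this, hwpB]
    rw [← this, msig_msig]
  · intro v a
    rw [wVClim_eq (fun v a => A a v) hTB' v a, wCVlim_eq A hTA' v a]
    have : msig ((wp (fun v a => A a v) T).2 v a) = (wp A T).1 v a := by
      have := congrFun (congrFun hb v) a
      rw [bcv] at this
      rw [← this, hwpB]
    rw [← this, msig_msig]

end Statement18Aux

/-- transposition swaps the slush variables and checks:
`V_s(Aᵀ) = C_s(A)` and `C_s(Aᵀ) = V_s(A)`. -/

theorem statement18 {m n : ℕ} (A : Mat m n) :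
    Vslush (fun v a => A a v) = Cslush A ∧ Cslush (fun v a => A a v) = Vslush A := by
  obtain ⟨hcv, hvc⟩ := Statement18Aux.lim_transpose A
  constructor
  · ext v
    have hset : {a : Fin n | (fun v a => A a v) a v = 1 ∧ wCVlim (fun v a => A a v) a v = Msg.s}
        = {a : Fin n | A v a = 1 ∧ wVClim A a v = Msg.s} := by
      ext a
      simp [hcv a v]
    simp only [Vslush, Cslush, Set.mem_setOf_eq, hset]
    constructor
    · rintro ⟨h1, h2⟩
      refine ⟨fun a ha => ?_, h2⟩
      have h := h1 a ha
      rw [hcv a v] at h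
      simpa using h
    · rintro ⟨h1, h2⟩
      refine ⟨fun a ha => ?_, h2⟩
      rw [hcv a v]
      have h := h1 a ha
      simpa using h
  · ext a
    have hset : {v : Fin m | (fun v a => A a v) a v = 1 ∧ wVClim (fun v a => A a v) v a = Msg.s}
        = {v : Fin m | A v a = 1 ∧ wCVlim A v a = Msg.s} := by
      ext v
      simp [hvc v a]
    simp only [Vslush, Cslush, Set.mem_setOf_eq, hset]
    constructor
    · rintro ⟨h1, h2⟩
      refine ⟨fun v hv => ?_, h2⟩
      have h := h1 v hv
      rw [hvc v a] at h
      simpa using h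
    · rintro ⟨h1, h2⟩
      refine ⟨fun v hv => ?_, h2⟩
      rw [hvc v a]
      have h := h1 v hv
      simpa using h
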